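/- Let s be a collinear central configuration with parameter μ > 0 of the planar n-body problem, and let (ρ(t), ν(t)) be a solution of the Kepler equations ρ̈ − ρν̇² = −μ/ρ², ρν̈ + 2ρ̇ν̇ = 0 with c = ρ²ν̇ ≠ 0, giving the homographic solution r = ρ Â(ν) s, p = M ṙ. For a ℝ^{2n}-valued function X of ν with derivative X', define R = ρ Â(ν) M^{-1/2} X and P = (c/ρ²) Â(ν) M^{1/2} (ρ' X + ρ Ĵ X + ρ X'), where ρ' = dρ/dν. If (M^{1/2}s)·X = (M^{1/2}Ĵs)·X = (M^{1/2}â)·X = (M^{1/2}Ĵâ)·X = 0 and likewise with X replaced by X', where â = ((1,0),…,(1,0)), then ∇H(r,p)·(R,P) = 0 and ∇C(r,p)·(R,P) = 0; that is, the variation (R,P) is tangent to the common level set {H = h, C = c}. -/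

import Mathlib

open Matrix Finset

/-- Euclidean norm of a planar vector. -/
noncomputable def norm2 (v : Fin 2 → ℝ) : ℝ := Real.sqrt (v 0 ^ 2 + v 1 ^ 2)

/-- The `i`-th block of the gradient of the Newtonian potential. -/
noncomputable def gradV {n : ℕ} (m : Fin n → ℝ) (r : Fin n → Fin 2 → ℝ) :
    Fin n → Fin 2 → ℝ :=
  fun i => ∑ j ∈ Finset.univ.erase i,
    (m i * m j / norm2 (r i - r j) ^ 3) • (r i - r j)

/-- The rotation matrix `A(ν)`. -/
noncomputable def rotM (θ : ℝ) : Matrix (Fin 2) (Fin 2) ℝ :=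
  !![Real.cos θ, -Real.sin θ; Real.sin θ, Real.cos θ]

/-- The rotation `J₂ = [[0,−1],[1,0]]` applied to a planar vector. -/
def j2 (v : Fin 2 → ℝ) : Fin 2 → ℝ := ![-(v 1), v 0]

/-- The transpose `J₂ᵀ` applied to a planar vector. -/
def j2t (v : Fin 2 → ℝ) : Fin 2 → ℝ := ![v 1, -(v 0)]

lemma rot_apply0 (θ : ℝ) (v : Fin 2 → ℝ) :
    (rotM θ).mulVec v 0 = Real.cos θ * v 0 - Real.sin θ * v 1 := by
  simp [rotM, Matrix.mulVec, dotProduct, Fin.sum_univ_two]; ring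

lemma rot_apply1 (θ : ℝ) (v : Fin 2 → ℝ) :
    (rotM θ).mulVec v 1 = Real.sin θ * v 0 + Real.cos θ * v 1 := by
  simp [rotM, Matrix.mulVec, dotProduct, Fin.sum_univ_two]

lemma rotDot (θ : ℝ) (u v : Fin 2 → ℝ) :
    (rotM θ).mulVec u ⬝ᵥ (rotM θ).mulVec v = u ⬝ᵥ v := by
  simp [dotProduct, Fin.sum_univ_two, rot_apply0, rot_apply1, rotM]
  linear_combination (u 0 * v 0 + u 1 * v 1) * Real.sin_sq_add_cos_sq θ

lemma rot_j2 (θ : ℝ) (v : Fin 2 → ℝ) :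
    (rotM θ).mulVec (j2 v) = j2 ((rotM θ).mulVec v) := by
  funext k; fin_cases k <;>
    simp [j2, rot_apply0, rot_apply1] <;> ring

lemma j2_smul (a : ℝ) (v : Fin 2 → ℝ) : j2 (a • v) = a • j2 v := by
  funext k; fin_cases k <;> simp [j2]

lemma j2t_dot (u v : Fin 2 → ℝ) : j2t u ⬝ᵥ v = u ⬝ᵥ j2 v := by
  simp [j2, j2t, dotProduct, Fin.sum_univ_two]; ring

lemma norm2_rot (θ : ℝ) (v : Fin 2 → ℝ) :
    norm2 ((rotM θ).mulVec v) = norm2 v := by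
  unfold norm2
  rw [rot_apply0, rot_apply1]
  congr 1
  linear_combination (v 0 ^ 2 + v 1 ^ 2) * Real.sin_sq_add_cos_sq θ

lemma norm2_smul (a : ℝ) (ha : 0 ≤ a) (v : Fin 2 → ℝ) :
    norm2 (a • v) = a * norm2 v := by
  unfold norm2
  have : (a • v) 0 ^ 2 + (a • v) 1 ^ 2 = a ^ 2 * (v 0 ^ 2 + v 1 ^ 2) := by
    simp [smul_eq_mul]; ring
  rw [this, Real.sqrt_mul (by positivity), Real.sqrt_sq ha]

lemma rot_sum {α : Type*} (F : Finset α) (f : α → Fin 2 → ℝ) (θ : ℝ) :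
    (rotM θ).mulVec (∑ j ∈ F, f j) = ∑ j ∈ F, (rotM θ).mulVec (f j) := by
  funext k; fin_cases k <;>
    simp [rot_apply0, rot_apply1, rotM, Matrix.vecHead, Matrix.vecTail, Finset.sum_apply, Finset.sum_sub_distrib,
      Finset.sum_add_distrib, Finset.mul_sum]

lemma hasDerivAt_rot_smul (ρ ν : ℝ → ℝ) (t : ℝ)
    (hρ : DifferentiableAt ℝ ρ t) (hν : DifferentiableAt ℝ ν t) (v : Fin 2 → ℝ) :
    HasDerivAt (fun τ => ρ τ • (rotM (ν τ)).mulVec v)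
      (deriv ρ t • (rotM (ν t)).mulVec v
        + (ρ t * deriv ν t) • (rotM (ν t)).mulVec (j2 v)) t := by
  have hν' := hν.hasDerivAt
  have hρ' := hρ.hasDerivAt
  have hcos : HasDerivAt (fun τ => Real.cos (ν τ)) (-Real.sin (ν t) * deriv ν t) t :=
    (Real.hasDerivAt_cos (ν t)).comp t hν'
  have hsin : HasDerivAt (fun τ => Real.sin (ν τ)) (Real.cos (ν t) * deriv ν t) t :=
    (Real.hasDerivAt_sin (ν t)).comp t hν'
  rw [hasDerivAt_pi]
  intro k
  fin_cases k
  · have h := hρ'.mul ((hcos.mul_const (v 0)).sub (hsin.mul_const (v 1)))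
    have hfn : (fun τ => (ρ τ • (rotM (ν τ)).mulVec v) (0 : Fin 2))
        = fun τ => ρ τ * (Real.cos (ν τ) * v 0 - Real.sin (ν τ) * v 1) := by
      funext τ; simp [rot_apply0, rotM, Matrix.vecHead, Matrix.vecTail, sub_eq_add_neg]
    rw [show ((⟨0, by norm_num⟩ : Fin 2)) = (0 : Fin 2) from rfl, hfn]
    refine h.congr_deriv ?_
    simp [rot_apply0, j2, rotM, Matrix.vecHead, Matrix.vecTail]
    ring
  · have h := hρ'.mul ((hsin.mul_const (v 0)).add (hcos.mul_const (v 1)))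
    have hfn : (fun τ => (ρ τ • (rotM (ν τ)).mulVec v) (1 : Fin 2))
        = fun τ => ρ τ * (Real.sin (ν τ) * v 0 + Real.cos (ν τ) * v 1) := by
      funext τ; simp [rot_apply1, rotM, Matrix.vecHead, Matrix.vecTail]
    rw [show ((⟨1, by norm_num⟩ : Fin 2)) = (1 : Fin 2) from rfl, hfn]
    refine h.congr_deriv ?_
    simp [rot_apply1, j2, rotM, Matrix.vecHead, Matrix.vecTail]
    ring
lemma rot_smul' (θ a : ℝ) (u : Fin 2 → ℝ) :
    a • (rotM θ).mulVec u = (rotM θ).mulVec (a • u) := by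
  funext k; fin_cases k <;> simp [rot_apply0, rot_apply1, rotM] <;> ring
/-- Along a Keplerian homographic solution associated with a collinear
central configuration, variations `(R,P)` built from `(X, X')` orthogonal (with the mass
weights) to `s`, `Ĵs`, `â` and `Ĵâ` are tangent to the common level set `{H = h, C = c}`:
`∇H(r,p)·(R,P) = 0` and `∇C(r,p)·(R,P) = 0`. -/
theorem variation_tangent_to_level_set
    {n : ℕ} (hn : 2 ≤ n) (m : Fin n → ℝ) (hm : ∀ i, 0 < m i)
    (x : Fin n → ℝ) (hx : Function.Injective x)
    (s : Fin n → Fin 2 → ℝ) (hs : s = fun i => ![x i, 0])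
    (μ : ℝ) (hμ : 0 < μ) (hcc : ∀ i, gradV m s i = (μ * m i) • s i)
    (ρ ν : ℝ → ℝ) (t c : ℝ) (hc : c ≠ 0)
    (hρpos : 0 < ρ t)
    (hρd : DifferentiableAt ℝ ρ t) (hνd : DifferentiableAt ℝ ν t)
    (hν : deriv ν t = c / ρ t ^ 2)
    (ρp : ℝ) (hρp : deriv ρ t = deriv ν t * ρp)
    (X X' : Fin n → Fin 2 → ℝ)
    (hoX1 : ∑ i, Real.sqrt (m i) * (s i ⬝ᵥ X i) = 0)
    (hoX2 : ∑ i, Real.sqrt (m i) * (j2 (s i) ⬝ᵥ X i) = 0)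
    (hoX3 : ∑ i, Real.sqrt (m i) * (![1, 0] ⬝ᵥ X i) = 0)
    (hoX4 : ∑ i, Real.sqrt (m i) * (![0, 1] ⬝ᵥ X i) = 0)
    (hoX1' : ∑ i, Real.sqrt (m i) * (s i ⬝ᵥ X' i) = 0)
    (hoX2' : ∑ i, Real.sqrt (m i) * (j2 (s i) ⬝ᵥ X' i) = 0)
    (hoX3' : ∑ i, Real.sqrt (m i) * (![1, 0] ⬝ᵥ X' i) = 0)
    (hoX4' : ∑ i, Real.sqrt (m i) * (![0, 1] ⬝ᵥ X' i) = 0)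
    (R P r p : Fin n → Fin 2 → ℝ)
    (hR : R = fun i => (ρ t / Real.sqrt (m i)) • (rotM (ν t)).mulVec (X i))
    (hP : P = fun i => ((c / ρ t ^ 2) * Real.sqrt (m i)) •
      (rotM (ν t)).mulVec (ρp • X i + ρ t • j2 (X i) + ρ t • X' i))
    (hr : r = fun i => ρ t • (rotM (ν t)).mulVec (s i))
    (hp : p = fun i => m i • deriv (fun τ => ρ τ • (rotM (ν τ)).mulVec (s i)) t) :
    ((∑ i, gradV m r i ⬝ᵥ R i) + ∑ i, ((m i)⁻¹ • p i) ⬝ᵥ P i = 0) ∧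
    ((∑ i, j2t (p i) ⬝ᵥ R i) + ∑ i, j2 (r i) ⬝ᵥ P i = 0) := by
  have hρ0 : ρ t ≠ 0 := ne_of_gt hρpos
  have hsq : ∀ i, Real.sqrt (m i) * Real.sqrt (m i) = m i :=
    fun i => Real.mul_self_sqrt (hm i).le
  have hspos : ∀ i, 0 < Real.sqrt (m i) := fun i => Real.sqrt_pos.mpr (hm i)
  have hnorm2pos : ∀ i j, i ≠ j → 0 < norm2 (s i - s j) := by
    intro i j hij
    have h0 : (s i - s j) 0 = x i - x j := by rw [hs]; simp
    have h1 : (s i - s j) 1 = 0 := by rw [hs]; simp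
    have hxij : x i - x j ≠ 0 := sub_ne_zero.mpr fun h => hij (hx h)
    unfold norm2
    rw [h0, h1]
    positivity
  -- the gradient of V along the homographic solution
  have hgrad : ∀ i, gradV m r i = (μ * m i / ρ t ^ 2) • (rotM (ν t)).mulVec (s i) := by
    intro i
    have hdiff : ∀ j, r i - r j = ρ t • (rotM (ν t)).mulVec (s i - s j) := by
      intro j; rw [hr]; simp only
      rw [Matrix.mulVec_sub, smul_sub]
    have key : (μ * m i / ρ t ^ 2) • (rotM (ν t)).mulVec (s i)
        = ∑ j ∈ Finset.univ.erase i,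
          ((m i * m j / norm2 (s i - s j) ^ 3) / ρ t ^ 2) •
            (rotM (ν t)).mulVec (s i - s j) := by
      calc (μ * m i / ρ t ^ 2) • (rotM (ν t)).mulVec (s i)
          = (ρ t ^ 2)⁻¹ • (rotM (ν t)).mulVec ((μ * m i) • s i) := by
            rw [← rot_smul', smul_smul]
            congr 1
            field_simp
        _ = (ρ t ^ 2)⁻¹ • (rotM (ν t)).mulVec (gradV m s i) := by rw [hcc i]
        _ = ∑ j ∈ Finset.univ.erase i,
              ((m i * m j / norm2 (s i - s j) ^ 3) / ρ t ^ 2) •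
                (rotM (ν t)).mulVec (s i - s j) := by
            unfold gradV
            rw [rot_sum, Finset.smul_sum]
            refine Finset.sum_congr rfl fun j hj => ?_
            rw [← rot_smul', smul_smul]
            congr 1
            rw [inv_mul_eq_div]
    rw [key]
    unfold gradV
    refine Finset.sum_congr rfl fun j hj => ?_
    have hij : i ≠ j := fun h => (Finset.mem_erase.mp hj).1 h.symm
    have hn2 := hnorm2pos i j hij
    rw [hdiff j, norm2_smul (ρ t) hρpos.le, norm2_rot, smul_smul]
    congr 1
    field_simp
  -- the momentum along the homographic solution
  have hpi : ∀ i, p i = m i • (deriv ρ t • (rotM (ν t)).mulVec (s i)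
      + (ρ t * deriv ν t) • (rotM (ν t)).mulVec (j2 (s i))) := by
    intro i
    rw [hp]; simp only
    rw [(hasDerivAt_rot_smul ρ ν t hρd hνd (s i)).deriv]
  -- the potential part of ∇H·(R,P)
  have key1 : ∀ i ∈ Finset.univ (α := Fin n), gradV m r i ⬝ᵥ R i
      = (μ / ρ t) * (Real.sqrt (m i) * (s i ⬝ᵥ X i)) := by
    intro i _
    rw [hgrad i, hR]; simp only
    rw [smul_dotProduct, dotProduct_smul, rotDot, smul_eq_mul, smul_eq_mul]
    have hσ := hsq i
    have hσ0 := (hspos i).ne'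
    set σ := Real.sqrt (m i) with hσd
    rw [← hσ]
    field_simp
  have sum1 : ∑ i, gradV m r i ⬝ᵥ R i = 0 := by
    rw [Finset.sum_congr rfl key1, ← Finset.mul_sum, hoX1, mul_zero]
  -- the kinetic part of ∇H·(R,P)
  have key2 : ∀ i ∈ Finset.univ (α := Fin n), ((m i)⁻¹ • p i) ⬝ᵥ P i
      = (c / ρ t ^ 2) ^ 2 *
        ((ρp ^ 2 + ρ t ^ 2) * (Real.sqrt (m i) * (s i ⬝ᵥ X i))
          + ρp * ρ t * (Real.sqrt (m i) * (s i ⬝ᵥ X' i))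
          + ρ t ^ 2 * (Real.sqrt (m i) * (j2 (s i) ⬝ᵥ X' i))) := by
    intro i _
    rw [hpi i, hP]; simp only
    rw [inv_smul_smul₀ (hm i).ne']
    rw [rot_smul', rot_smul', ← Matrix.mulVec_add, dotProduct_smul, rotDot, smul_eq_mul]
    simp only [dotProduct, Fin.sum_univ_two, Pi.add_apply, Pi.smul_apply, smul_eq_mul,
      j2, Matrix.cons_val_zero, Matrix.cons_val_one, Matrix.head_cons]
    rw [hρp, hν]
    field_simp
    ring
  have sum2 : ∑ i, ((m i)⁻¹ • p i) ⬝ᵥ P i = 0 := by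
    rw [Finset.sum_congr rfl key2, ← Finset.mul_sum, Finset.sum_add_distrib,
      Finset.sum_add_distrib, ← Finset.mul_sum, ← Finset.mul_sum, ← Finset.mul_sum,
      hoX1, hoX1', hoX2']
    ring
  -- the angular momentum part
  have keyC : ∀ i ∈ Finset.univ (α := Fin n),
      j2t (p i) ⬝ᵥ R i + j2 (r i) ⬝ᵥ P i
      = 2 * c * (Real.sqrt (m i) * (s i ⬝ᵥ X i))
        + c * (Real.sqrt (m i) * (j2 (s i) ⬝ᵥ X' i)) := by
    intro i _
    rw [hpi i, hR, hr, hP]; simp only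
    rw [j2t_dot]
    simp only [j2_smul, ← rot_j2, rot_smul', ← Matrix.mulVec_add]
    rw [rotDot, rotDot]
    simp only [dotProduct, Fin.sum_univ_two, Pi.add_apply, Pi.smul_apply, smul_eq_mul,
      j2, Matrix.cons_val_zero, Matrix.cons_val_one, Matrix.head_cons]
    have hσ := hsq i
    have hσ0 := (hspos i).ne'
    set σ := Real.sqrt (m i) with hσd
    rw [← hσ, hρp, hν]
    field_simp
    ring
  have sumC : (∑ i, j2t (p i) ⬝ᵥ R i) + ∑ i, j2 (r i) ⬝ᵥ P i = 0 := by
    rw [← Finset.sum_add_distrib, Finset.sum_congr rfl keyC, Finset.sum_add_distrib,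
      ← Finset.mul_sum, ← Finset.mul_sum, hoX1, hoX2']
    ring
  exact ⟨by rw [sum1, sum2, add_zero], sumC⟩
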